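/- Let s be a finite set, let ε > 0, and let d : s → ℝ satisfy 0 ≤ d(ℓ) ≤ ε for all ℓ ∈ s, with D = ∑_{ℓ∈s} d(ℓ) > 0. Under the uniform probability measure on the set of all functions χ : s → {0,1} (equivalently, each coordinate is 0 or 1 independently with probability 1/2), the probability that the random variable X(χ) = (∑_{ℓ∈s, χ(ℓ)=1} d(ℓ)) / D satisfies X < 1/3 or X > 2/3 is at most 18ε/D. -/

import Mathlib

/-!
With signs `σ(b) = ±1`, the centred half-sum is `X χ - D/2 = (1/2) ∑ ℓ, σ(χ ℓ) d ℓ`. Over the cube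
`{0,1}^s` the products `σ(χ i) σ(χ j)` with `i ≠ j` sum to zero (flipping coordinate `i` reverses
their sign), so the second moment of `X - D/2` is `2^|s|/4 · ∑ ℓ, d ℓ ^ 2 ≤ 2^|s| ε D / 4`.
Outside `[D/3, 2D/3]` one has `(X - D/2)^2 ≥ (D/6)^2`, and Chebyshev's inequality, read as a count,
bounds the bad fraction by `9ε/D`.
-/

open Finset

def Bool.toSign (b : Bool) : ℝ := if b then 1 else -1

@[simp] lemma Bool.toSign_not (b : Bool) : (!b).toSign = -b.toSign := by
  cases b <;> simp [Bool.toSign]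

@[simp] lemma Bool.toSign_mul_self (b : Bool) : b.toSign * b.toSign = 1 := by
  cases b <;> simp [Bool.toSign]

lemma sum_ite_sub_half_sum {ι : Type*} [Fintype ι] (χ : ι → Bool) (w : ι → ℝ) :
    (∑ i, if χ i then w i else 0) - (∑ i, w i) / 2 = (∑ i, (χ i).toSign * w i) / 2 := by
  rw [sum_div, sum_div, ← sum_sub_distrib]
  refine sum_congr rfl fun i _ => ?_
  cases χ i <;> simp [Bool.toSign] <;> ring

section BoolCube

variable {ι : Type*} [Fintype ι] [DecidableEq ι]

lemma sum_toSign_mul_toSign_of_ne {i j : ι} (hij : i ≠ j) :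
    ∑ χ : ι → Bool, (χ i).toSign * (χ j).toSign = 0 := by
  refine sum_involution (fun χ _ => Function.update χ i (!χ i)) (fun χ _ => ?_)
    (fun χ _ _ => ?_) (fun _ _ => mem_univ _) (fun χ _ => ?_)
  · simp [Function.update_of_ne hij.symm]
  · exact fun h => by simpa using congr_fun h i
  · ext k
    by_cases hk : k = i <;> simp [hk]

lemma sum_toSign_mul_toSign (i j : ι) :
    ∑ χ : ι → Bool, (χ i).toSign * (χ j).toSign = if i = j then 2 ^ Fintype.card ι else 0 := by
  split_ifs with hij
  · subst hij
    simp
  · exact sum_toSign_mul_toSign_of_ne hij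

lemma sum_sq_sum_toSign_mul (w : ι → ℝ) :
    ∑ χ : ι → Bool, (∑ i, (χ i).toSign * w i) ^ 2 = 2 ^ Fintype.card ι * ∑ i, w i ^ 2 := by
  calc ∑ χ : ι → Bool, (∑ i, (χ i).toSign * w i) ^ 2
      = ∑ i, ∑ j, w i * w j * ∑ χ : ι → Bool, (χ i).toSign * (χ j).toSign := by
        simp_rw [sq, sum_mul_sum, mul_sum]
        rw [sum_comm]
        refine sum_congr rfl fun i _ => ?_
        rw [sum_comm]
        exact sum_congr rfl fun j _ => sum_congr rfl fun χ _ => by ring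
    _ = 2 ^ Fintype.card ι * ∑ i, w i ^ 2 := by
        simp [sum_toSign_mul_toSign, mul_sum, sq, mul_comm]

lemma sum_sq_sum_ite_sub_half_sum (w : ι → ℝ) :
    ∑ χ : ι → Bool, ((∑ i, if χ i then w i else 0) - (∑ i, w i) / 2) ^ 2
      = 2 ^ Fintype.card ι / 4 * ∑ i, w i ^ 2 := by
  simp_rw [sum_ite_sub_half_sum, div_pow, ← sum_div, sum_sq_sum_toSign_mul]
  ring

end BoolCube

lemma card_filter_mul_le_sum_of_le {α : Type*} [Fintype α] {p : α → Prop} [DecidablePred p]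
    {f : α → ℝ} {t : ℝ} (hf : ∀ x, 0 ≤ f x) (hp : ∀ x, p x → t ≤ f x) :
    (#{x | p x} : ℝ) * t ≤ ∑ x, f x :=
  calc (#{x | p x} : ℝ) * t = #{x | p x} • t := (nsmul_eq_mul _ _).symm
    _ ≤ ∑ x ∈ {x | p x}, f x := card_nsmul_le_sum _ _ _ fun x hx => hp x (mem_filter.1 hx).2
    _ ≤ ∑ x, f x := sum_le_univ_sum_of_nonneg hf

lemma sum_sq_le_mul_sum {α : Type*} {s : Finset α} {f : α → ℝ} {ε : ℝ}
    (hf : ∀ i ∈ s, 0 ≤ f i ∧ f i ≤ ε) : ∑ i ∈ s, f i ^ 2 ≤ ε * ∑ i ∈ s, f i := by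
  rw [mul_sum]
  refine sum_le_sum fun i hi => ?_
  rw [sq]
  exact mul_le_mul_of_nonneg_right (hf i hi).2 (hf i hi).1

lemma sq_div_six_le_sq_sub_half {x D : ℝ} (hD : 0 < D) (h : x / D < 1 / 3 ∨ 2 / 3 < x / D) :
    (D / 6) ^ 2 ≤ (x - D / 2) ^ 2 := by
  rw [div_lt_iff₀ hD, lt_div_iff₀ hD] at h
  rcases h with h | h <;> nlinarith

theorem random_half_sum_concentration (s : Finset ℕ) (ε : ℝ)
    (d : ℕ → ℝ) (hd : ∀ ℓ ∈ s, 0 ≤ d ℓ ∧ d ℓ ≤ ε)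
    (hD : 0 < ∑ ℓ ∈ s, d ℓ) :
    (Nat.card {χ : {ℓ // ℓ ∈ s} → Bool //
        (∑ ℓ : {ℓ // ℓ ∈ s}, if χ ℓ then d ℓ else 0) / (∑ ℓ ∈ s, d ℓ) < 1 / 3 ∨
        2 / 3 < (∑ ℓ : {ℓ // ℓ ∈ s}, if χ ℓ then d ℓ else 0) / (∑ ℓ ∈ s, d ℓ)} : ℝ) /
      2 ^ s.card ≤ 18 * ε / (∑ ℓ ∈ s, d ℓ) := by
  set D := ∑ ℓ ∈ s, d ℓ
  set X : ({ℓ // ℓ ∈ s} → Bool) → ℝ := fun χ => ∑ ℓ : {ℓ // ℓ ∈ s}, if χ ℓ then d ℓ else 0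
  set bad := #{χ | X χ / D < 1 / 3 ∨ 2 / 3 < X χ / D}
  have hchebyshev : (bad : ℝ) * (D / 6) ^ 2 ≤ 2 ^ s.card / 4 * (ε * D) :=
    calc (bad : ℝ) * (D / 6) ^ 2 ≤ ∑ χ, (X χ - D / 2) ^ 2 :=
          card_filter_mul_le_sum_of_le (fun _ => sq_nonneg _) fun _ => sq_div_six_le_sq_sub_half hD
      _ = 2 ^ s.card / 4 * ∑ ℓ ∈ s, d ℓ ^ 2 := by
          have := sum_sq_sum_ite_sub_half_sum fun ℓ : {ℓ // ℓ ∈ s} => d ℓ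
          rwa [sum_coe_sort s d, sum_coe_sort s fun ℓ => d ℓ ^ 2, Fintype.card_coe] at this
      _ ≤ 2 ^ s.card / 4 * (ε * D) := by gcongr; exact sum_sq_le_mul_sum hd
  have hbad : (bad : ℝ) * D ≤ 9 * 2 ^ s.card * ε := by
    refine le_of_mul_le_mul_right ?_ hD
    linarith
  rw [Nat.card_eq_fintype_card, Fintype.card_subtype, div_le_div_iff₀ (by positivity) hD]
  nlinarith [mul_nonneg (Nat.cast_nonneg bad) hD.le]
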